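/- For every k ≥ 2, the digraph D⃗_{2k+1} is not α-diperfect: {x_0, x_{2k}} is a maximum stable set of D⃗_{2k+1} for which no path partition of D⃗_{2k+1} is orthogonal to it. -/

import Mathlib

/-- A directed path in a digraph with arc relation `A`: a nonempty list of distinct
vertices each of which dominates the next. -/
def IsDipath {V : Type*} (A : V → V → Prop) (p : List V) : Prop :=
  p ≠ [] ∧ p.Nodup ∧ p.Chain' A

/-- A path partition of the digraph `(V, A)`: a collection of vertex-disjoint directed
paths covering all of `V`. -/
def IsPathPartition {V : Type*} (A : V → V → Prop) (P : Set (List V)) : Prop :=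
  (∀ p ∈ P, IsDipath A p) ∧
  (∀ p ∈ P, ∀ q ∈ P, p ≠ q → ∀ v : V, v ∈ p → v ∉ q) ∧
  (∀ v : V, ∃ p ∈ P, v ∈ p)

/-- A path partition `P` and a stable set `S` are orthogonal if every path of `P`
contains exactly one vertex of `S`. -/
def OrthogonalPP {V : Type*} (P : Set (List V)) (S : Set V) : Prop :=
  ∀ p ∈ P, ∃! v : V, v ∈ S ∧ v ∈ p

/-- A directed path of the subdigraph induced by the vertex set `W`. -/
def IsDipathOn {V : Type*} (A : V → V → Prop) (W : Set V) (p : List V) : Prop :=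
  p ≠ [] ∧ p.Nodup ∧ (∀ v ∈ p, v ∈ W) ∧ p.Chain' A

/-- A path partition of the subdigraph induced by the vertex set `W`. -/
def IsPathPartitionOn {V : Type*} (A : V → V → Prop) (W : Set V) (P : Set (List V)) : Prop :=
  (∀ p ∈ P, IsDipathOn A W p) ∧
  (∀ p ∈ P, ∀ q ∈ P, p ≠ q → ∀ v : V, v ∈ p → v ∉ q) ∧
  (∀ v ∈ W, ∃ p ∈ P, v ∈ p)

/-- A stable set: a set of pairwise non-adjacent vertices. -/
def IsStableSet {V : Type*} (A : V → V → Prop) (S : Set V) : Prop :=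
  ∀ u ∈ S, ∀ v ∈ S, u ≠ v → ¬ A u v ∧ ¬ A v u

/-- A digraph is α-diperfect if for every induced subdigraph (on a vertex set `W`) and
every maximum stable set `S` of it, there is a path partition of it orthogonal to `S`. -/
def AlphaDiperfect {V : Type*} (A : V → V → Prop) : Prop :=
  ∀ (W S : Set V), S ⊆ W → IsStableSet A S →
    (∀ T ⊆ W, IsStableSet A T → T.ncard ≤ S.ncard) →
    ∃ P : Set (List V), IsPathPartitionOn A W P ∧ OrthogonalPP P S

/-- The arc relation of the digraph `D⃗_{2k+1}` on vertices `x_0, …, x_{2k}`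
(realized as `ZMod (2*k+1)`): the arcs are exactly the pairs `(x_i, x_j)` with
`0 ≤ i < j ≤ 2k`, `j - i ≥ 2` and `(i, j) ≠ (0, 2k)`. -/
def DvecArc (k : ℕ) (u v : ZMod (2*k+1)) : Prop :=
  u.val + 2 ≤ v.val ∧ ¬(u.val = 0 ∧ v.val = 2*k)

/-!
Every arc of `D⃗_{2k+1}` raises the index by at least two, so a directed path whose indices lie
in an interval `[lo, hi]` has at most `(hi - lo) / 2 + 1` vertices. In a path partition
orthogonal to `{x_0, x_{2k}}` every path meets exactly one of the two vertices, so there are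
exactly two paths: one avoiding `x_{2k}` (indices in `[0, 2k-1]`) and one avoiding `x_0`
(indices in `[1, 2k]`). Each has at most `k` vertices, too few to cover all `2k + 1`.
For `k ≥ 2`, no three indices are pairwise at distance at most one or equal to `{0, 2k}`, so
stable sets have at most two elements and `{x_0, x_{2k}}` is maximum.
-/

section Paths

variable {V : Type*} {A : V → V → Prop}

theorem List.IsChain.add_two_mul_length_le {R : V → V → Prop} (f : V → ℕ)
    (hR : ∀ u v, R u v → f u + 2 ≤ f v) {hi : ℕ} :
    ∀ {a : V} {l : List V}, (a :: l).IsChain R → (∀ v ∈ a :: l, f v ≤ hi) →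
      f a + 2 * l.length ≤ hi
  | a, [], _, hl => by simpa using hl a (by simp)
  | a, b :: l, hc, hl => by
    rw [List.isChain_cons_cons] at hc
    have hab := hR a b hc.1
    have ih := hc.2.add_two_mul_length_le f hR fun v hv => hl v (List.mem_cons_of_mem a hv)
    simp only [List.length_cons] at ih ⊢
    omega

theorem IsDipath.two_mul_length_le (f : V → ℕ) (hA : ∀ u v, A u v → f u + 2 ≤ f v)
    {p : List V} (hp : IsDipath A p) {lo hi : ℕ} (hlo : ∀ v ∈ p, lo ≤ f v)
    (hhi : ∀ v ∈ p, f v ≤ hi) : 2 * p.length ≤ hi + 2 - lo := by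
  obtain ⟨a, l, rfl⟩ := List.exists_cons_of_ne_nil hp.1
  have := List.IsChain.add_two_mul_length_le f hA hp.2.2 hhi
  have := hlo a List.mem_cons_self
  simp only [List.length_cons]
  omega

theorem IsPathPartition.eq_of_mem {P : Set (List V)} (hP : IsPathPartition A P)
    {p q : List V} (hp : p ∈ P) (hq : q ∈ P) {v : V} (hvp : v ∈ p) (hvq : v ∈ q) : p = q :=
  by_contra fun hpq => hP.2.1 p hp q hq hpq v hvp hvq

theorem OrthogonalPP.notMem_of_mem {P : Set (List V)} {S : Set V} (hPS : OrthogonalPP P S)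
    {p : List V} (hp : p ∈ P) {s t : V} (hs : s ∈ S) (ht : t ∈ S) (hst : s ≠ t)
    (hsp : s ∈ p) : t ∉ p := fun htp =>
  hst ((hPS p hp).unique ⟨hs, hsp⟩ ⟨ht, htp⟩)

theorem IsPathPartition.exists_cover_of_orthogonalPP_pair {P : Set (List V)}
    (hP : IsPathPartition A P) {s t : V} (hPS : OrthogonalPP P {s, t}) (hst : s ≠ t) :
    ∃ p ∈ P, ∃ q ∈ P, s ∈ p ∧ t ∉ p ∧ t ∈ q ∧ s ∉ q ∧ ∀ v, v ∈ p ∨ v ∈ q := by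
  obtain ⟨p, hp, hsp⟩ := hP.2.2 s
  obtain ⟨q, hq, htq⟩ := hP.2.2 t
  refine ⟨p, hp, q, hq, hsp, hPS.notMem_of_mem hp (by simp) (by simp) hst hsp, htq,
    hPS.notMem_of_mem hq (by simp) (by simp) hst.symm htq, fun v => ?_⟩
  obtain ⟨r, hr, hvr⟩ := hP.2.2 v
  obtain ⟨x, ⟨hx, hxr⟩, -⟩ := hPS r hr
  rcases hx with rfl | rfl
  · exact .inl (hP.eq_of_mem hr hp hxr hsp ▸ hvr)
  · exact .inr (hP.eq_of_mem hr hq hxr htq ▸ hvr)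

theorem AlphaDiperfect.exists_isPathPartition_orthogonalPP (hA : AlphaDiperfect A)
    {S : Set V} (hS : IsStableSet A S) (hmax : ∀ T, IsStableSet A T → T.ncard ≤ S.ncard) :
    ∃ P, IsPathPartition A P ∧ OrthogonalPP P S := by
  obtain ⟨P, ⟨hpaths, hdisj, hcover⟩, hPS⟩ :=
    hA Set.univ S (Set.subset_univ S) hS fun T _ hT => hmax T hT
  exact ⟨P, ⟨fun p hp => ⟨(hpaths p hp).1, (hpaths p hp).2.1, (hpaths p hp).2.2.2⟩, hdisj,
    fun v => hcover v (Set.mem_univ v)⟩, hPS⟩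

end Paths

theorem Fintype.card_le_length_add_length {V : Type*} [Fintype V] {p q : List V}
    (h : ∀ v, v ∈ p ∨ v ∈ q) : Fintype.card V ≤ p.length + q.length := by
  classical
  have hcover : (p ++ q).toFinset = Finset.univ :=
    Finset.eq_univ_of_forall fun v => by simpa using h v
  calc Fintype.card V = (p ++ q).toFinset.card := by rw [hcover, Finset.card_univ]
    _ ≤ (p ++ q).length := List.toFinset_card_le _
    _ = p.length + q.length := List.length_append

namespace DvecArc

variable {k : ℕ}

theorem isStableSet_pair {u v : ZMod (2*k+1)} (hu : u.val = 0) (hv : v.val = 2*k) :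
    IsStableSet (DvecArc k) {u, v} := by
  intro x hx y hy hxy
  simp only [Set.mem_insert_iff, Set.mem_singleton_iff] at hx hy
  rcases hx with rfl | rfl <;> rcases hy with rfl | rfl <;>
    simp only [ne_eq, not_true_eq_false] at hxy <;>
    simp only [DvecArc] <;> omega

theorem ncard_le_two_of_isStableSet (hk : 2 ≤ k) {T : Set (ZMod (2*k+1))}
    (hT : IsStableSet (DvecArc k) T) : T.ncard ≤ 2 := by
  by_contra! hcard
  obtain ⟨a, ha, b, hb, c, hc, hab, hac, hbc⟩ := (Set.two_lt_ncard (Set.toFinite T)).1 hcard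
  have := hT a ha b hb hab
  have := hT a ha c hc hac
  have := hT b hb c hc hbc
  have := (ZMod.val_injective _).ne hab
  have := (ZMod.val_injective _).ne hac
  have := (ZMod.val_injective _).ne hbc
  have := ZMod.val_lt a
  have := ZMod.val_lt b
  have := ZMod.val_lt c
  simp only [DvecArc] at *
  omega

theorem not_exists_isPathPartition_orthogonalPP_pair (hk : 1 ≤ k) {u v : ZMod (2*k+1)}
    (hu : u.val = 0) (hv : v.val = 2*k) :
    ¬ ∃ P, IsPathPartition (DvecArc k) P ∧ OrthogonalPP P {u, v} := by
  rintro ⟨P, hP, hPS⟩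
  have huv : u ≠ v := fun h => by rw [h] at hu; omega
  obtain ⟨p, hp, q, hq, -, hvp, -, huq, hcover⟩ :=
    hP.exists_cover_of_orthogonalPP_pair hPS huv
  have val_ne {x y : ZMod (2*k+1)} {r : List (ZMod (2*k+1))} (hy : y ∉ r) (hx : x ∈ r) :
      x.val ≠ y.val := fun h => hy (ZMod.val_injective _ h ▸ hx)
  have hp_len := (hP.1 p hp).two_mul_length_le ZMod.val (fun _ _ h => h.1) (lo := 0)
    (hi := 2*k - 1) (fun _ _ => Nat.zero_le _)
    fun x hx => by have := val_ne hvp hx; have := ZMod.val_lt x; omega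
  have hq_len := (hP.1 q hq).two_mul_length_le ZMod.val (fun _ _ h => h.1) (lo := 1)
    (hi := 2*k) (fun x hx => by have := val_ne huq hx; omega)
    fun x _ => by have := ZMod.val_lt x; omega
  have hcard := Fintype.card_le_length_add_length hcover
  rw [ZMod.card] at hcard
  omega

end DvecArc

/-- for `k ≥ 2`, `D⃗_{2k+1}` is not α-diperfect: `{x_0, x_{2k}}` is a
maximum stable set admitting no orthogonal path partition. -/
theorem stmt_11 (k : ℕ) (hk : 2 ≤ k) :
    IsStableSet (DvecArc k)
      {((0 : ℕ) : ZMod (2*k+1)), ((2*k : ℕ) : ZMod (2*k+1))} ∧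
    (∀ T : Set (ZMod (2*k+1)), IsStableSet (DvecArc k) T →
      T.ncard ≤ ({((0 : ℕ) : ZMod (2*k+1)), ((2*k : ℕ) : ZMod (2*k+1))} :
        Set (ZMod (2*k+1))).ncard) ∧
    (¬ ∃ P : Set (List (ZMod (2*k+1))), IsPathPartition (DvecArc k) P ∧
      OrthogonalPP P {((0 : ℕ) : ZMod (2*k+1)), ((2*k : ℕ) : ZMod (2*k+1))}) ∧
    ¬ AlphaDiperfect (DvecArc k) := by
  have h0 : ((0 : ℕ) : ZMod (2*k+1)).val = 0 := by simp
  have h2k : ((2*k : ℕ) : ZMod (2*k+1)).val = 2*k := ZMod.val_natCast_of_lt (by omega)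
  have hne : ((0 : ℕ) : ZMod (2*k+1)) ≠ ((2*k : ℕ) : ZMod (2*k+1)) :=
    fun h => by rw [h, h2k] at h0; omega
  have stable := DvecArc.isStableSet_pair h0 h2k
  have maximum : ∀ T, IsStableSet (DvecArc k) T →
      T.ncard ≤ ({((0 : ℕ) : ZMod (2*k+1)), ((2*k : ℕ) : ZMod (2*k+1))} : Set _).ncard :=
    fun T hT => (Set.ncard_pair hne).symm ▸ DvecArc.ncard_le_two_of_isStableSet hk hT
  have no_partition := DvecArc.not_exists_isPathPartition_orthogonalPP_pair (by omega) h0 h2k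
  exact ⟨stable, maximum, no_partition,
    fun hA => no_partition (hA.exists_isPathPartition_orthogonalPP stable maximum)⟩
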